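/- The cycle C₇ admits two distinct embeddings in its complement: there exist embeddings σ₁ and σ₂ of C₇ such that the complement of C₇ ⊕ σ₁(C₇) is isomorphic to C₇, while the complement of C₇ ⊕ σ₂(C₇) is isomorphic to C₃ ∪ C₄; in particular C₇ is not uniquely embeddable. -/

import Mathlib

open SimpleGraph

/-- The cycle graph on `ZMod n`: `i` and `j` adjacent iff they differ by one. -/
def CycGraph (n : ℕ) : SimpleGraph (ZMod n) where
  Adj i j := i ≠ j ∧ (i = j + 1 ∨ j = i + 1)
  symm := by constructor; rintro i j ⟨hne, h⟩; exact ⟨hne.symm, h.symm⟩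
  loopless := by constructor; rintro i ⟨hne, _⟩; exact hne rfl

/-- `σ` is an embedding of `G` into its complement. -/
def IsGraphEmbedding {V : Type*} (G : SimpleGraph V) (σ : Equiv.Perm V) : Prop :=
  ∀ x y, G.Adj x y → ¬ G.Adj (σ x) (σ y)

/-- The edge sum `G ⊕ σ(G)`. -/
def EdgeSum {V : Type*} (G : SimpleGraph V) (σ : Equiv.Perm V) : SimpleGraph V :=
  G ⊔ G.map σ.toEmbedding

/-- Vertex-disjoint union of two graphs. -/
def DisjUnion {α β : Type*} (G : SimpleGraph α) (H : SimpleGraph β) :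
    SimpleGraph (α ⊕ β) where
  Adj x y :=
    (∃ a b, x = Sum.inl a ∧ y = Sum.inl b ∧ G.Adj a b) ∨
    (∃ a b, x = Sum.inr a ∧ y = Sum.inr b ∧ H.Adj a b)
  symm := by
    constructor
    rintro x y (⟨a, b, rfl, rfl, h⟩ | ⟨a, b, rfl, rfl, h⟩)
    · exact Or.inl ⟨b, a, rfl, rfl, h.symm⟩
    · exact Or.inr ⟨b, a, rfl, rfl, h.symm⟩
  loopless := by
    constructor
    rintro x (⟨a, b, rfl, h, hadj⟩ | ⟨a, b, rfl, h, hadj⟩) <;>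
      · cases h; exact hadj.ne rfl

/-!
For `σ₁ = (2 * ·)` the edge sum `C₇ ⊕ σ₁(C₇)` joins the vertices differing by `±1` or `±2`, so
its complement joins those differing by `±3`, and multiplication by `5 = 3⁻¹` turns it into `C₇`.
For the 6-cycle `σ₂ = (1 2 5 6 4 3)` the complement of the edge sum is the triangle `{0, 3, 5}`
together with the 4-cycle `1 – 4 – 2 – 6`. Isomorphic graphs have isomorphic complements, and
`C₇` is triangle-free while `C₃ ∪ C₄` is not, so the two edge sums are not isomorphic.
-/

namespace SimpleGraph

variable {U V W : Type*}

def Iso.compl {G : SimpleGraph V} {H : SimpleGraph W} (e : G ≃g H) : Gᶜ ≃g Hᶜ :=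
  ⟨e.toEquiv, by simp [e.map_adj_iff]⟩

instance {G : SimpleGraph V} {H : SimpleGraph W} [DecidableRel G.Adj] [DecidableRel H.Adj] :
    DecidableRel (G ⊕g H).Adj
  | .inl _, .inl _ => decidable_of_iff _ sum_adj_inl.symm
  | .inr _, .inr _ => decidable_of_iff _ sum_adj_inr.symm
  | .inl _, .inr _ => isFalse (not_adj_sum_inl_inr _ _)
  | .inr _, .inl _ => isFalse fun h => not_adj_sum_inl_inr _ _ h.symm

theorem not_nonempty_iso_of_compl_iso {G H : SimpleGraph V} {A : SimpleGraph W}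
    {B : SimpleGraph U} {k : ℕ} (eA : Gᶜ ≃g A) (eB : Hᶜ ≃g B) (hA : A.CliqueFree k)
    (hB : ¬ B.CliqueFree k) : ¬ Nonempty (G ≃g H) := by
  rintro ⟨e⟩
  exact hB (hA.comap (Iso.isContained' (eA.symm.trans (e.compl.trans eB))))

end SimpleGraph

theorem cycGraph_adj {n : ℕ} {i j : ZMod n} :
    (CycGraph n).Adj i j ↔ i ≠ j ∧ (i = j + 1 ∨ j = i + 1) :=
  Iff.rfl

instance (n : ℕ) : DecidableRel (CycGraph n).Adj :=
  fun _ _ => decidable_of_iff _ cycGraph_adj.symm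

theorem cycGraph_cliqueFree_three {n : ℕ} (hn : 4 ≤ n) : (CycGraph n).CliqueFree 3 := by
  have h3 : (3 : ZMod n) ≠ 0 := by
    rw [← Nat.cast_ofNat, Ne, ZMod.natCast_eq_zero_iff]
    exact Nat.not_dvd_of_pos_of_lt (by norm_num) (by omega)
  intro s hs
  obtain ⟨a, b, c, hab, hac, hbc, -⟩ := is3Clique_iff.1 hs
  rw [cycGraph_adj] at hab hac hbc
  grind

theorem cycGraph_three_not_cliqueFree : ¬ (CycGraph 3).CliqueFree 3 :=
  fun h => h {0, 1, 2} (is3Clique_triple_iff.2 (by decide))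

theorem disjUnion_eq_sum {α β : Type*} (G : SimpleGraph α) (H : SimpleGraph β) :
    DisjUnion G H = G ⊕g H := by
  ext (a | a) (b | b) <;> simp [DisjUnion]

section EdgeSum

variable {V : Type*} (G : SimpleGraph V) (σ : Equiv.Perm V)

theorem edgeSum_adj {u v : V} :
    (EdgeSum G σ).Adj u v ↔ G.Adj u v ∨ G.Adj (σ.symm u) (σ.symm v) := by
  rw [EdgeSum, sup_adj, ← comap_symm, comap_adj]
  rfl

instance [DecidableRel G.Adj] : DecidableRel (EdgeSum G σ).Adj :=
  fun _ _ => decidable_of_iff _ (edgeSum_adj G σ).symm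

instance [Fintype V] [DecidableRel G.Adj] : Decidable (IsGraphEmbedding G σ) :=
  inferInstanceAs (Decidable (∀ x y, G.Adj x y → ¬ G.Adj (σ x) (σ y)))

end EdgeSum

def c7MulTwo : Equiv.Perm (ZMod 7) := Units.mulLeft ⟨2, 4, by decide, by decide⟩

def c7SixCycle : Equiv.Perm (ZMod 7) := c[1, 2, 5, 6, 4, 3]

theorem isGraphEmbedding_c7MulTwo : IsGraphEmbedding (CycGraph 7) c7MulTwo := by decide

theorem isGraphEmbedding_c7SixCycle : IsGraphEmbedding (CycGraph 7) c7SixCycle := by decide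

def complEdgeSumMulTwoIso : (EdgeSum (CycGraph 7) c7MulTwo)ᶜ ≃g CycGraph 7 :=
  ⟨Units.mulLeft ⟨5, 3, by decide, by decide⟩, by decide⟩

noncomputable def sumIsoComplEdgeSumSixCycle :
    CycGraph 3 ⊕g CycGraph 4 ≃g (EdgeSum (CycGraph 7) c7SixCycle)ᶜ :=
  ⟨.ofBijective (Sum.elim ![0, 3, 5] ![1, 4, 2, 6]) (by decide), by decide⟩

/-- `C₇` has two distinct embeddings: one whose edge-sum has complement isomorphic to `C₇`
and one whose edge-sum has complement isomorphic to `C₃ ∪ C₄`; the two edge-sums are not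
isomorphic, so `C₇` is not uniquely embeddable. -/
theorem c7_two_distinct_embeddings :
    ∃ σ₁ σ₂ : Equiv.Perm (ZMod 7),
      IsGraphEmbedding (CycGraph 7) σ₁ ∧ IsGraphEmbedding (CycGraph 7) σ₂ ∧
      Nonempty ((EdgeSum (CycGraph 7) σ₁)ᶜ ≃g CycGraph 7) ∧
      Nonempty ((EdgeSum (CycGraph 7) σ₂)ᶜ ≃g DisjUnion (CycGraph 3) (CycGraph 4)) ∧
      ¬ Nonempty (EdgeSum (CycGraph 7) σ₁ ≃g EdgeSum (CycGraph 7) σ₂) := by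
  have e₂ := sumIsoComplEdgeSumSixCycle.symm
  refine ⟨c7MulTwo, c7SixCycle, isGraphEmbedding_c7MulTwo, isGraphEmbedding_c7SixCycle,
    ⟨complEdgeSumMulTwoIso⟩, ⟨disjUnion_eq_sum _ _ ▸ e₂⟩, ?_⟩
  refine not_nonempty_iso_of_compl_iso complEdgeSumMulTwoIso e₂
    (cycGraph_cliqueFree_three (by norm_num)) fun h => ?_
  exact cycGraph_three_not_cliqueFree (h.comap Embedding.sumInl.isContained)
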